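/- Let J be a measurable range function, W ⊆ L²(Ω, H) the closed subspace corresponding to J, R a measurable range operator on J, and U : W → W a bounded linear operator satisfying (Uφ)(ω) = R(ω)(φ(ω)) for a.e. ω ∈ Ω, for every φ ∈ W. Then U is an isometry (‖Uφ‖ = ‖φ‖ for all φ ∈ W) if and only if for a.e. ω ∈ Ω, R(ω) is an isometry on J(ω), i.e., ‖R(ω)a‖ = ‖a‖ for all a ∈ J(ω). (Proposition 3.4(1), stated in the multiplication-preserving formulation on L²(Ω, H).) -/

import Mathlib

open MeasureTheory
open scoped ENNReal NNReal

/-- The orthogonal projection of `H` onto a closed subspace `K`, as a map `H →L[ℂ] H`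
(junk `0` if `K` is not closed). -/
noncomputable def projCLM {H : Type*} [NormedAddCommGroup H] [InnerProductSpace ℂ H]
    [CompleteSpace H] (K : Submodule ℂ H) : H →L[ℂ] H :=
  haveI := Classical.dec (IsClosed (K : Set H))
  if h : IsClosed (K : Set H) then
    haveI : CompleteSpace K := h.completeSpace_coe
    K.subtypeL.comp (K.orthogonalProjectionOnto)
  else 0

/-- The subspace `W = {φ ∈ L²(Ω, H) : φ(ω) ∈ J(ω) for a.e. ω}` corresponding to a
range function `J`. -/
noncomputable def rangeSubmodule {Ω H : Type*} [MeasurableSpace Ω] (μ : Measure Ω)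
    [NormedAddCommGroup H] [InnerProductSpace ℂ H]
    (J : Ω → Submodule ℂ H) : Submodule ℂ (Lp H 2 μ) where
  carrier := {φ | ∀ᵐ ω ∂μ, (φ : Ω → H) ω ∈ J ω}
  add_mem' := by
    intro φ ψ hφ hψ
    simp only [Set.mem_setOf_eq] at *
    filter_upwards [Lp.coeFn_add φ ψ, hφ, hψ] with ω h1 h2 h3
    rw [h1]; exact (J ω).add_mem h2 h3
  zero_mem' := by
    simp only [Set.mem_setOf_eq]
    filter_upwards [Lp.coeFn_zero H 2 μ] with ω h
    rw [h]; exact (J ω).zero_mem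
  smul_mem' := by
    intro c φ hφ
    simp only [Set.mem_setOf_eq] at *
    filter_upwards [Lp.coeFn_smul c φ, hφ] with ω h1 h2
    rw [h1]; exact (J ω).smul_mem c h2

section Helpers
open TopologicalSpace

variable {H : Type*} [NormedAddCommGroup H] [InnerProductSpace ℂ H]

lemma projCLM_mem' [CompleteSpace H] {K : Submodule ℂ H} (hK : IsClosed (K : Set H)) (x : H) :
    projCLM K x ∈ K := by
  haveI : CompleteSpace K := hK.completeSpace_coe
  simp only [projCLM, dif_pos hK]
  exact SetLike.coe_mem _

lemma projCLM_eq_self' [CompleteSpace H] {K : Submodule ℂ H} (hK : IsClosed (K : Set H))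
    {x : H} (hx : x ∈ K) : projCLM K x = x := by
  haveI : CompleteSpace K := hK.completeSpace_coe
  simp only [projCLM, dif_pos hK]
  exact Submodule.starProjection_eq_self_iff.mpr hx

lemma projCLM_norm_le' [CompleteSpace H] (K : Submodule ℂ H) (x : H) :
    ‖projCLM K x‖ ≤ ‖x‖ := by
  by_cases hK : IsClosed (K : Set H)
  · haveI : CompleteSpace K := hK.completeSpace_coe
    simp only [projCLM, dif_pos hK]
    calc ‖(K.orthogonalProjectionOnto x : H)‖ = ‖K.orthogonalProjectionOnto x‖ := rfl
      _ ≤ ‖K.orthogonalProjectionOnto‖ * ‖x‖ := (K.orthogonalProjectionOnto).le_opNorm x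
      _ ≤ 1 * ‖x‖ := by
          have := Submodule.orthogonalProjectionOnto_norm_le K
          nlinarith [norm_nonneg x]
      _ = ‖x‖ := one_mul _
  · simp only [projCLM, dif_neg hK, ContinuousLinearMap.zero_apply, norm_zero, norm_nonneg]

lemma norm_sq_eq_iSup' [SeparableSpace H] (x : H) :
    ‖x‖ ^ 2 = ⨆ n, (2 * (inner ℂ x (denseSeq H n) : ℂ).re - ‖denseSeq H n‖ ^ 2) := by
  haveI : Nonempty H := ⟨0⟩
  have key : ∀ y : H, 2 * (inner ℂ x y : ℂ).re - ‖y‖ ^ 2 = ‖x‖ ^ 2 - ‖x - y‖ ^ 2 := by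
    intro y
    have h := @norm_sub_sq ℂ _ _ _ _ x y
    simp only [RCLike.re_to_complex] at h
    linarith
  have bdd : BddAbove (Set.range fun n =>
      2 * (inner ℂ x (denseSeq H n) : ℂ).re - ‖denseSeq H n‖ ^ 2) := by
    refine ⟨‖x‖ ^ 2, ?_⟩
    rintro _ ⟨n, rfl⟩
    show 2 * (inner ℂ x (denseSeq H n) : ℂ).re - ‖denseSeq H n‖ ^ 2 ≤ _
    rw [key]
    nlinarith [sq_nonneg ‖x - denseSeq H n‖]
  apply le_antisymm
  · refine le_of_forall_pos_le_add fun ε hε => ?_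
    obtain ⟨y, ⟨n, rfl⟩, hy⟩ :=
      Metric.mem_closure_iff.mp (denseRange_denseSeq H x) (Real.sqrt ε) (Real.sqrt_pos.mpr hε)
    have hterm : ‖x‖ ^ 2 - ε ≤ 2 * (inner ℂ x (denseSeq H n) : ℂ).re - ‖denseSeq H n‖ ^ 2 := by
      rw [key]
      have h2 : ‖x - denseSeq H n‖ ^ 2 < ε := by
        have := (Real.lt_sqrt dist_nonneg).mp hy
        rwa [dist_eq_norm] at this
      linarith
    have := le_ciSup bdd n
    linarith
  · refine ciSup_le fun n => ?_
    rw [key]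
    nlinarith [sq_nonneg ‖x - denseSeq H n‖]

variable {α : Type*} [MeasurableSpace α]

lemma measurable_norm_sq_of_inner' [SeparableSpace H] {f : α → H}
    (hf : ∀ b : H, Measurable fun ω => (inner ℂ (f ω) b : ℂ)) :
    Measurable fun ω => ‖f ω‖ ^ 2 := by
  haveI : Nonempty H := ⟨0⟩
  have hrw : (fun ω => ‖f ω‖ ^ 2) =
      fun ω => ⨆ n, (2 * (inner ℂ (f ω) (denseSeq H n) : ℂ).re - ‖denseSeq H n‖ ^ 2) :=
    funext fun ω => norm_sq_eq_iSup' _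
  rw [hrw]
  exact Measurable.iSup fun n =>
    ((Complex.measurable_re.comp (hf _)).const_mul 2).sub measurable_const

lemma measurable_dist_of_inner' [SeparableSpace H] {f : α → H}
    (hf : ∀ b : H, Measurable fun ω => (inner ℂ (f ω) b : ℂ)) (c : H) :
    Measurable fun ω => dist (f ω) c := by
  have hrw : ∀ ω, dist (f ω) c =
      Real.sqrt (‖f ω‖ ^ 2 - 2 * (inner ℂ (f ω) c : ℂ).re + ‖c‖ ^ 2) := by
    intro ω
    have h := @norm_sub_sq ℂ _ _ _ _ (f ω) c
    simp only [RCLike.re_to_complex] at h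
    rw [dist_eq_norm, ← h, Real.sqrt_sq (norm_nonneg _)]
  simp_rw [hrw]
  apply Measurable.sqrt
  exact ((measurable_norm_sq_of_inner' hf).sub
    ((Complex.measurable_re.comp (hf c)).const_mul 2)).add measurable_const

lemma stronglyMeasurable_of_inner' [SeparableSpace H] {f : α → H}
    (hf : ∀ b : H, Measurable fun ω => (inner ℂ (f ω) b : ℂ)) :
    StronglyMeasurable f := by
  haveI : Nonempty H := ⟨0⟩
  borelize H
  haveI : SecondCountableTopology H := UniformSpace.secondCountable_of_separable H
  refine Measurable.stronglyMeasurable ?_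
  refine measurable_of_isOpen fun s hs => ?_
  have hd := denseRange_denseSeq H
  have key : f ⁻¹' s = ⋃ (p : ℕ × ℚ) (_ : Metric.ball (denseSeq H p.1) (p.2 : ℝ) ⊆ s),
      f ⁻¹' Metric.ball (denseSeq H p.1) (p.2 : ℝ) := by
    ext ω
    simp only [Set.mem_iUnion, Set.mem_preimage]
    constructor
    · intro hω
      obtain ⟨ε, hε, hball⟩ := Metric.isOpen_iff.mp hs _ hω
      obtain ⟨q, hq0, hq⟩ := exists_rat_btwn (half_pos hε)
      have hq0' : (0 : ℝ) < q := hq0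
      obtain ⟨y, ⟨n, rfl⟩, hy⟩ := Metric.mem_closure_iff.mp (hd (f ω)) q hq0'
      refine ⟨(n, q), fun z hz => hball ?_, Metric.mem_ball.mpr hy⟩
      have hzb : dist z (denseSeq H n) < q := Metric.mem_ball.mp hz
      have : dist z (f ω) < ε := by
        calc dist z (f ω) ≤ dist z (denseSeq H n) + dist (denseSeq H n) (f ω) :=
              dist_triangle _ _ _
          _ < q + q := add_lt_add hzb (by rwa [dist_comm] at hy)
          _ < ε := by linarith
      exact Metric.mem_ball.mpr this
    · rintro ⟨p, hsub, hmem⟩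
      exact hsub hmem
  rw [key]
  refine MeasurableSet.iUnion fun p => MeasurableSet.iUnion fun _ => ?_
  exact (measurable_dist_of_inner' hf (denseSeq H p.1)) measurableSet_Iio

variable {Ω : Type*} [MeasurableSpace Ω] {μ : Measure Ω}

lemma L2_norm_sq' (ψ : Lp H 2 μ) : ‖ψ‖ ^ 2 = ∫ ω, ‖(ψ : Ω → H) ω‖ ^ 2 ∂μ := by
  have h1 : RCLike.re (inner ℂ ψ ψ : ℂ) = ‖ψ‖ ^ 2 := inner_self_eq_norm_sq ψ
  rw [← h1, L2.inner_def, ← integral_re (L2.integrable_inner ψ ψ)]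
  exact integral_congr_ae (Filter.Eventually.of_forall fun ω => inner_self_eq_norm_sq _)

lemma L2_integrable_norm_sq' (ψ : Lp H 2 μ) :
    Integrable (fun ω => ‖(ψ : Ω → H) ω‖ ^ 2) μ := by
  have h := (L2.integrable_inner (𝕜 := ℂ) ψ ψ).re
  exact h.congr (Filter.Eventually.of_forall fun ω => inner_self_eq_norm_sq _)

end Helpers

/-- **Proposition 3.4(1) (multiplication-preserving formulation).** Let `J` be a measurable
range function with corresponding closed subspace `W ⊆ L²(Ω, H)`, `R` a measurable range
operator on `J`, and `U : W → W` a bounded linear operator with `(Uφ)(ω) = R(ω)(φ(ω))`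
a.e. for every `φ ∈ W`. Then `U` is an isometry if and only if `R(ω)` is an isometry on
`J(ω)` for a.e. `ω`. -/


theorem translation_preserving_stmt12
    {Ω H : Type*} [MeasurableSpace Ω] (μ : Measure Ω) [SigmaFinite μ]
    [NormedAddCommGroup H] [InnerProductSpace ℂ H] [CompleteSpace H]
    [TopologicalSpace.SeparableSpace H]
    [TopologicalSpace.SeparableSpace (Lp ℂ 2 μ)]
    -- `J` is a measurable range function:
    (J : Ω → Submodule ℂ H)
    (hJclosed : ∀ ω, IsClosed ((J ω : Set H)))
    (hJmeas : ∀ a b : H, Measurable fun ω => (inner ℂ (projCLM (J ω) a) b : ℂ))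
    -- `R` is a measurable range operator on `J`:
    (R : Ω → H →L[ℂ] H)
    (hR : ∀ᵐ ω ∂μ, ∀ a : H, R ω a = R ω (projCLM (J ω) a))
    (hRmeas : ∀ a b : H, Measurable fun ω => (inner ℂ (R ω (projCLM (J ω) a)) b : ℂ))
    -- `U : W → W` is a bounded linear operator with `(Uφ)(ω) = R(ω)(φ(ω))` a.e.:
    (U : rangeSubmodule μ J →L[ℂ] rangeSubmodule μ J)
    (hUR : ∀ φ : rangeSubmodule μ J,
      ∀ᵐ ω ∂μ, ((U φ : Lp H 2 μ)) ω = R ω ((φ : Lp H 2 μ) ω)) :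
    -- `U` is an isometry iff `R(ω)` is an isometry on `J(ω)` for a.e. `ω`:
    (∀ φ : rangeSubmodule μ J, ‖U φ‖ = ‖φ‖)
      ↔ (∀ᵐ ω ∂μ, ∀ a ∈ J ω, ‖R ω a‖ = ‖a‖) := by
  haveI : Nonempty H := ⟨0⟩
  constructor
  · -- forward direction
    intro hiso
    have main : ∀ a : H, ∀ᵐ ω ∂μ, ‖R ω (projCLM (J ω) a)‖ = ‖projCLM (J ω) a‖ := by
      intro a
      set pa : Ω → H := fun ω => projCLM (J ω) a with hpa
      have hpam : StronglyMeasurable pa := stronglyMeasurable_of_inner' (hJmeas a)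
      have hpaJ : ∀ ω, pa ω ∈ J ω := fun ω => projCLM_mem' (hJclosed ω) a
      have hpanorm : ∀ ω, ‖pa ω‖ ≤ ‖a‖ := fun ω => projCLM_norm_le' _ a
      have H1 : ∀ s : Set Ω, MeasurableSet s → μ s < ∞ →
          IntegrableOn (fun ω => ‖R ω (pa ω)‖ ^ 2) s μ ∧
          ∫ ω in s, ‖R ω (pa ω)‖ ^ 2 ∂μ = ∫ ω in s, ‖pa ω‖ ^ 2 ∂μ := by
        intro s hs hμs
        have hfs_mem : MemLp (s.indicator pa) 2 μ := by
          refine MemLp.of_le (memLp_indicator_const 2 hs (‖a‖ : ℝ) (Or.inr hμs.ne))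
            (hpam.indicator hs).aestronglyMeasurable
            (Filter.Eventually.of_forall fun ω => ?_)
          by_cases hω : ω ∈ s
          · simp only [Set.indicator_of_mem hω, Real.norm_eq_abs,
              abs_of_nonneg (norm_nonneg a)]
            exact hpanorm ω
          · simp [Set.indicator_of_notMem hω]
        have hφs_memW : hfs_mem.toLp (s.indicator pa) ∈ rangeSubmodule μ J := by
          show ∀ᵐ ω ∂μ, _ ∈ J ω
          filter_upwards [hfs_mem.coeFn_toLp] with ω h
          rw [h]
          by_cases hω : ω ∈ s
          · rw [Set.indicator_of_mem hω]; exact hpaJ ω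
          · rw [Set.indicator_of_notMem hω]; exact (J ω).zero_mem
        set φs : rangeSubmodule μ J := ⟨hfs_mem.toLp _, hφs_memW⟩ with hφsdef
        have hcoe : ((φs : Lp H 2 μ) : Ω → H) =ᵐ[μ] s.indicator pa := hfs_mem.coeFn_toLp
        have hUφ : (fun ω => ‖((U φs : Lp H 2 μ) : Ω → H) ω‖ ^ 2)
            =ᵐ[μ] s.indicator (fun ω => ‖R ω (pa ω)‖ ^ 2) := by
          filter_upwards [hUR φs, hcoe] with ω e1 e2
          rw [e1, e2]
          by_cases hω : ω ∈ s
          · rw [Set.indicator_of_mem hω, Set.indicator_of_mem hω]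
          · rw [Set.indicator_of_notMem hω, Set.indicator_of_notMem hω, map_zero,
              norm_zero]
            norm_num
        have hφ : (fun ω => ‖((φs : Lp H 2 μ) : Ω → H) ω‖ ^ 2)
            =ᵐ[μ] s.indicator (fun ω => ‖pa ω‖ ^ 2) := by
          filter_upwards [hcoe] with ω e2
          rw [e2]
          by_cases hω : ω ∈ s
          · rw [Set.indicator_of_mem hω, Set.indicator_of_mem hω]
          · rw [Set.indicator_of_notMem hω, Set.indicator_of_notMem hω, norm_zero]
            norm_num
        have hint : Integrable (s.indicator fun ω => ‖R ω (pa ω)‖ ^ 2) μ :=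
          (L2_integrable_norm_sq' (U φs : Lp H 2 μ)).congr hUφ
        constructor
        · exact (integrable_indicator_iff hs).mp hint
        · have hnorm : ‖(U φs : Lp H 2 μ)‖ = ‖(φs : Lp H 2 μ)‖ := hiso φs
          have hsqeq : ∫ ω, ‖((U φs : Lp H 2 μ) : Ω → H) ω‖ ^ 2 ∂μ
              = ∫ ω, ‖((φs : Lp H 2 μ) : Ω → H) ω‖ ^ 2 ∂μ := by
            rw [← L2_norm_sq', ← L2_norm_sq', hnorm]
          calc ∫ ω in s, ‖R ω (pa ω)‖ ^ 2 ∂μ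
              = ∫ ω, s.indicator (fun ω => ‖R ω (pa ω)‖ ^ 2) ω ∂μ :=
                (integral_indicator hs).symm
            _ = ∫ ω, ‖((U φs : Lp H 2 μ) : Ω → H) ω‖ ^ 2 ∂μ :=
                (integral_congr_ae hUφ).symm
            _ = ∫ ω, ‖((φs : Lp H 2 μ) : Ω → H) ω‖ ^ 2 ∂μ := hsqeq
            _ = ∫ ω, s.indicator (fun ω => ‖pa ω‖ ^ 2) ω ∂μ := integral_congr_ae hφ
            _ = ∫ ω in s, ‖pa ω‖ ^ 2 ∂μ := integral_indicator hs
      have hg_int : ∀ s : Set Ω, MeasurableSet s → μ s < ∞ →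
          IntegrableOn (fun ω => ‖pa ω‖ ^ 2) s μ := by
        intro s hs hμs
        refine Integrable.mono' (g := fun _ => ‖a‖ ^ 2)
          (integrableOn_const hμs.ne)
          (hpam.norm.measurable.pow_const 2).aestronglyMeasurable
          (Filter.Eventually.of_forall fun ω => ?_)
        rw [Real.norm_eq_abs, abs_of_nonneg (by positivity)]
        exact pow_le_pow_left₀ (norm_nonneg _) (hpanorm ω) 2
      have hsq : (fun ω => ‖R ω (pa ω)‖ ^ 2) =ᵐ[μ] fun ω => ‖pa ω‖ ^ 2 :=
        ae_eq_of_forall_setIntegral_eq_of_sigmaFinite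
          (fun s hs hμs => (H1 s hs hμs).1) hg_int (fun s hs hμs => (H1 s hs hμs).2)
      filter_upwards [hsq] with ω h
      rw [← Real.sqrt_sq (norm_nonneg (R ω (pa ω))), h, Real.sqrt_sq (norm_nonneg _)]
    have hall : ∀ᵐ ω ∂μ, ∀ n : ℕ,
        ‖R ω (projCLM (J ω) (TopologicalSpace.denseSeq H n))‖ = ‖projCLM (J ω) (TopologicalSpace.denseSeq H n)‖ :=
      ae_all_iff.mpr fun n => main (TopologicalSpace.denseSeq H n)
    filter_upwards [hall] with ω hω b hb
    obtain ⟨u, hu_mem, hu_lim⟩ := mem_closure_iff_seq_limit.mp (TopologicalSpace.denseRange_denseSeq H b)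
    choose m hm using hu_mem
    have hPlim : Filter.Tendsto (fun k => projCLM (J ω) (u k)) Filter.atTop (nhds b) := by
      have := ((projCLM (J ω)).continuous.tendsto b).comp hu_lim
      rwa [projCLM_eq_self' (hJclosed ω) hb] at this
    have h1 : Filter.Tendsto (fun k => ‖R ω (projCLM (J ω) (u k))‖)
        Filter.atTop (nhds ‖R ω b‖) := by
      have := ((R ω).continuous.tendsto b).comp hPlim
      exact (continuous_norm.tendsto _).comp this
    have h2 : Filter.Tendsto (fun k => ‖projCLM (J ω) (u k)‖) Filter.atTop (nhds ‖b‖) :=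
      (continuous_norm.tendsto _).comp hPlim
    have heq : (fun k => ‖R ω (projCLM (J ω) (u k))‖)
        = fun k => ‖projCLM (J ω) (u k)‖ := by
      funext k
      rw [← hm k]
      exact hω (m k)
    rw [heq] at h1
    exact tendsto_nhds_unique h1 h2
  · -- reverse direction
    intro hae φ
    have hφmem : ∀ᵐ ω ∂μ, ((φ : Lp H 2 μ) : Ω → H) ω ∈ J ω := φ.2
    have key : ∫ ω, ‖((U φ : Lp H 2 μ) : Ω → H) ω‖ ^ 2 ∂μ
        = ∫ ω, ‖((φ : Lp H 2 μ) : Ω → H) ω‖ ^ 2 ∂μ := by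
      refine integral_congr_ae ?_
      filter_upwards [hUR φ, hφmem, hae] with ω e1 e2 e3
      rw [e1, e3 _ e2]
    have hsq : ‖(U φ : Lp H 2 μ)‖ ^ 2 = ‖(φ : Lp H 2 μ)‖ ^ 2 := by
      rw [L2_norm_sq', L2_norm_sq', key]
    have : ‖(U φ : Lp H 2 μ)‖ = ‖(φ : Lp H 2 μ)‖ := by
      rw [← Real.sqrt_sq (norm_nonneg (U φ : Lp H 2 μ)), hsq,
        Real.sqrt_sq (norm_nonneg _)]
    exact this
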